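/- arXiv:1003.2496 — 3 statements merged into one kernel-verified Lean document; each statement's English description precedes it below -/
import Mathlib

section
/- Suppose κ is an uncountable cardinal, T is a set of reals of cardinality κ, and 𝒜 is a family of countably infinite subsets of T with |𝒜| = κ such that (a) for each A ∈ 𝒜 the set (closure of A) ∩ T has cardinality κ, and (b) every subset of T of cardinality ℵ₁ contains some member of 𝒜. Then there exists an almost disjoint family ℬ of countably infinite subsets of T with |ℬ| = κ such that every subset of T of cardinality ℵ₁ contains some member of ℬ. -/
/-!
Enumerate `𝒜` as `(A x)` along the initial well-order of `κ`. Since `closure (A x) ∩ T` has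
size `κ` while `A x` and each proper initial segment are smaller, a transfinite recursion
picks pairwise distinct points `p x ∈ (closure (A x) ∩ T) \ A x`. Take `B x ⊆ A x` a sequence
converging to `p x`: sequences with distinct limits meet in a finite set, so the `B x` are
almost disjoint, and each member of `𝒜` contains one of them.
-/

open Cardinal Set Filter Topology Function

universe u

theorem Cardinal.mk_sdiff_eq_left {α : Type u} {S T : Set α} (hS : ℵ₀ ≤ #S) (hT : #T < #S) :
    #(S \ T : Set α) = #S := by
  refine le_antisymm (mk_le_mk_of_subset sdiff_subset) (not_lt.1 fun h => ?_)
  exact (le_mk_sdiff_add_mk S T).not_gt (add_lt_of_lt hS h hT)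

theorem exists_injective_forall_mem_of_mk_Iio_lt {ι α : Type u} [LinearOrder ι]
    [WellFoundedLT ι] (S : ι → Set α) (hS : ∀ i, #(Iio i) < #(S i)) :
    ∃ f : ι → α, Injective f ∧ ∀ i, f i ∈ S i := by
  have avoid : ∀ i (g : Iio i → α), (S i \ range g).Nonempty := fun i _ =>
    sdiff_nonempty_of_mk_lt_mk (mk_range_le.trans_lt (hS i))
  let f : ι → α := wellFounded_lt.fix fun i rec => (avoid i fun j => rec j j.2).some
  have hf : ∀ i, f i ∈ S i \ range fun j : Iio i => f j := fun i => by
    rw [show f i = _ from wellFounded_lt.fix_eq _ i]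
    exact Nonempty.some_mem _
  refine ⟨f, fun i j hij => ?_, fun i => (hf i).1⟩
  by_contra hne
  rcases lt_or_gt_of_ne hne with h | h
  · exact (hf j).2 ⟨⟨i, h⟩, hij⟩
  · exact (hf i).2 ⟨⟨j, h⟩, hij.symm⟩

theorem tendsto_subtype_range_cofinite {ι X : Type*} {f : ι → X} {l : Filter X}
    (hf : Tendsto f cofinite l) : Tendsto ((↑) : range f → X) cofinite l := by
  intro U hU
  have hfin : (f ⁻¹' U)ᶜ.Finite := hf hU
  refine ((hfin.image f).preimage Subtype.val_injective.injOn).subset ?_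
  rintro ⟨_, i, rfl⟩ hi
  exact ⟨i, hi, rfl⟩

theorem exists_infinite_subset_tendsto_cofinite {X : Type*} [TopologicalSpace X] [T1Space X]
    [FrechetUrysohnSpace X] {A : Set X} {p : X} (hp : p ∈ closure A) (hpA : p ∉ A) :
    ∃ B ⊆ A, B.Infinite ∧ Tendsto ((↑) : B → X) cofinite (𝓝 p) := by
  obtain ⟨u, huA, hu⟩ := mem_closure_iff_seq_limit.1 hp
  have hrange : range u ⊆ A := range_subset_iff.2 huA
  refine ⟨range u, hrange, fun hfin => ?_, ?_⟩
  · obtain ⟨n, hn⟩ :=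
      (hu.eventually_mem (hfin.isClosed.isOpen_compl.mem_nhds fun h => hpA (hrange h))).exists
    exact hn (mem_range_self n)
  · rw [← Nat.cofinite_eq_atTop] at hu
    exact tendsto_subtype_range_cofinite hu

theorem Set.Finite.inter_of_tendsto_cofinite_nhds {X : Type*} [TopologicalSpace X] [T2Space X]
    {B C : Set X} {p q : X} (hB : Tendsto ((↑) : B → X) cofinite (𝓝 p))
    (hC : Tendsto ((↑) : C → X) cofinite (𝓝 q)) (hpq : p ≠ q) : (B ∩ C).Finite := by
  by_contra h
  have : Infinite ↥(B ∩ C) := Set.Infinite.to_subtype h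
  exact hpq (tendsto_nhds_unique (hB.comp (inclusion_injective inter_subset_left).tendsto_cofinite)
    (hC.comp (inclusion_injective inter_subset_right).tendsto_cofinite))

theorem stmt1_general (κ : Cardinal) (hκ : Cardinal.aleph0 < κ)
    (T : Set ℝ)
    (𝒜 : Set (Set ℝ))
    (h𝒜sub : ∀ A ∈ 𝒜, A ⊆ T ∧ #A = Cardinal.aleph0)
    (h𝒜card : #𝒜 = κ)
    (ha : ∀ A ∈ 𝒜, #(closure A ∩ T : Set ℝ) = κ)
    (hb : ∀ X : Set ℝ, X ⊆ T → #X = Cardinal.aleph 1 → ∃ A ∈ 𝒜, A ⊆ X) :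
    ∃ ℬ : Set (Set ℝ),
      (∀ B ∈ ℬ, B ⊆ T ∧ #B = Cardinal.aleph0) ∧
      #ℬ = κ ∧
      (∀ B ∈ ℬ, ∀ B' ∈ ℬ, B ≠ B' → (B ∩ B').Finite) ∧
      (∀ X : Set ℝ, X ⊆ T → #X = Cardinal.aleph 1 → ∃ B ∈ ℬ, B ⊆ X) := by
  obtain ⟨e⟩ : Nonempty (κ.ord.ToType ≃ 𝒜) :=
    Cardinal.eq.1 (by rw [mk_ord_toType, h𝒜card])
  set A : κ.ord.ToType → Set ℝ := fun x => e x
  have hA x : A x ∈ 𝒜 := (e x).2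
  obtain ⟨p, hp_inj, hp⟩ := exists_injective_forall_mem_of_mk_Iio_lt
    (fun x => (closure (A x) ∩ T) \ A x) fun x => by
      have hAx := ha _ (hA x)
      rw [mk_sdiff_eq_left (hAx ▸ hκ.le) (hAx ▸ (h𝒜sub _ (hA x)).2 ▸ hκ), hAx]
      simpa using mk_Iio_lt x
  choose B hBA hBinf hBp using fun x =>
    exists_infinite_subset_tendsto_cofinite (hp x).1.1 (hp x).2
  have hB_ad : ∀ x y, x ≠ y → (B x ∩ B y).Finite := fun x y h =>
    .inter_of_tendsto_cofinite_nhds (hBp x) (hBp y) (hp_inj.ne h)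
  have hB_inj : Injective B := fun x y h =>
    by_contra fun hne => hBinf x (by simpa [h] using hB_ad x y hne)
  refine ⟨range B, ?_, by rw [mk_range_eq _ hB_inj, mk_ord_toType], ?_, ?_⟩
  · rintro _ ⟨x, rfl⟩
    have : Infinite (B x) := (hBinf x).to_subtype
    refine ⟨(hBA x).trans (h𝒜sub _ (hA x)).1, le_antisymm ?_ (aleph0_le_mk _)⟩
    exact (mk_le_mk_of_subset (hBA x)).trans_eq (h𝒜sub _ (hA x)).2
  · rintro _ ⟨x, rfl⟩ _ ⟨y, rfl⟩ hne
    exact hB_ad x y (ne_of_apply_ne B hne)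
  · intro X hX hXcard
    obtain ⟨A', hA', hA'X⟩ := hb X hX hXcard
    exact ⟨B (e.symm ⟨A', hA'⟩), mem_range_self _, (hBA _).trans (by simpa [A] using hA'X)⟩

/-- If `κ` is uncountable, `T ⊆ ℝ` has cardinality `κ`, and `𝒜` is a family of countably
infinite subsets of `T` of cardinality `κ` with (a) `|closure A ∩ T| = κ` for each `A ∈ 𝒜`
and (b) every subset of `T` of cardinality `ℵ₁` contains a member of `𝒜`, then there is an
almost disjoint family `ℬ` of countably infinite subsets of `T` with `|ℬ| = κ` such that
every subset of `T` of cardinality `ℵ₁` contains a member of `ℬ`. -/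
theorem stmt1 (κ : Cardinal) (hκ : Cardinal.aleph0 < κ)
    (T : Set ℝ) (hT : #T = κ)
    (𝒜 : Set (Set ℝ))
    (h𝒜sub : ∀ A ∈ 𝒜, A ⊆ T ∧ #A = Cardinal.aleph0)
    (h𝒜card : #𝒜 = κ)
    (ha : ∀ A ∈ 𝒜, #(closure A ∩ T : Set ℝ) = κ)
    (hb : ∀ X : Set ℝ, X ⊆ T → #X = Cardinal.aleph 1 → ∃ A ∈ 𝒜, A ⊆ X) :
    ∃ ℬ : Set (Set ℝ),
      (∀ B ∈ ℬ, B ⊆ T ∧ #B = Cardinal.aleph0) ∧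
      #ℬ = κ ∧
      (∀ B ∈ ℬ, ∀ B' ∈ ℬ, B ≠ B' → (B ∩ B').Finite) ∧
      (∀ X : Set ℝ, X ⊆ T → #X = Cardinal.aleph 1 → ∃ B ∈ ℬ, B ⊆ X) :=
  stmt1_general κ hκ T 𝒜 h𝒜sub h𝒜card ha hb
end

section
/- For the *-product P = ∏*_{i∈X} P_i of posets, with p ≤ q iff p(i) ≤ q(i) for all i and {i : p(i) < q(i) < 1} is finite: p ≤ q if and only if there exists r with p ≤_h r ≤_v q, and also if and only if there exists t with p ≤_v t ≤_h q. -/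
open Cardinal

variable {X : Type} {P : X → Type} [∀ i, PartialOrder (P i)] [∀ i, OrderTop (P i)]

/-- The support of an element of the product of posets with top elements. -/
def starSupp (p : ∀ i, P i) : Set X := {i | p i ≠ ⊤}

/-- The order of the *-product: pointwise `≤` with only finitely many coordinates where
`p i < q i < ⊤`. -/
def starLe (p q : ∀ i, P i) : Prop :=
  (∀ i, p i ≤ q i) ∧ {i | p i < q i ∧ q i < ⊤}.Finite

/-- The horizontal relation: `supp p ⊇ supp q` and `p` agrees with `q` on `supp q`. -/
def starLeH (p q : ∀ i, P i) : Prop := ∀ i, q i ≠ ⊤ → p i = q i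

/-- The vertical relation: `p ≤ q` with equal supports. -/
def starLeV (p q : ∀ i, P i) : Prop := starLe p q ∧ starSupp p = starSupp q

/-
The backward implications are transitivity of `starLe`, since both `≤_h` and `≤_v` refine it.
For the forward ones, given `p ≤ q`, the witness `r` is `p` cut down to `supp q` (set to `⊤`
elsewhere), and `t` is `q` on `supp q` and `p` off it; pointwise `p ≤ q` gives
`supp q ⊆ supp p`, which makes the supports come out right.
-/

section StarProduct

variable {p q r : ∀ i, P i}

theorem starSupp_subset_of_le (h : ∀ i, p i ≤ q i) : starSupp q ⊆ starSupp p :=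
  fun i hq hp => hq (eq_top_mono (h i) hp)

theorem starLe.trans (hpq : starLe p q) (hqr : starLe q r) : starLe p r := by
  refine ⟨fun i => (hpq.1 i).trans (hqr.1 i), (hpq.2.union hqr.2).subset ?_⟩
  rintro i ⟨hpr, hr⟩
  rcases (hpq.1 i).lt_or_eq with hpq_i | hpq_i
  · exact Or.inl ⟨hpq_i, (hqr.1 i).trans_lt hr⟩
  · exact Or.inr ⟨hpq_i ▸ hpr, hr⟩

theorem starLeH.starLe (h : starLeH p q) : starLe p q := by
  refine ⟨fun i => ?_, Set.finite_empty.subset fun i ⟨hlt, hq⟩ => hlt.ne (h i hq.ne)⟩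
  by_cases hq : q i = ⊤
  · exact hq ▸ le_top
  · exact (h i hq).le

theorem exists_starLeH_starLeV_of_starLe (h : starLe p q) :
    ∃ r, starSupp r = starSupp q ∧ starLeH p r ∧ starLeV r q := by
  classical
  have hsupp : starSupp (fun i => if q i = ⊤ then ⊤ else p i) = starSupp q := by
    ext i
    by_cases hq : q i = ⊤
    · simp [starSupp, hq]
    · simpa [starSupp, hq] using starSupp_subset_of_le h.1 hq
  refine ⟨_, hsupp, fun i hr => (if_neg fun hq => hr (if_pos hq)).symm,
    ⟨fun i => ?_, h.2.subset fun i hi => ?_⟩, hsupp⟩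
  · by_cases hq : q i = ⊤ <;> simp [hq, h.1 i]
  · simpa [hi.2.ne] using hi

theorem exists_starLeV_starLeH_of_starLe (h : starLe p q) :
    ∃ t, starSupp t = starSupp p ∧ starLeV p t ∧ starLeH t q := by
  classical
  have hsupp : starSupp (fun i => if q i = ⊤ then p i else q i) = starSupp p := by
    ext i
    by_cases hq : q i = ⊤
    · simp [starSupp, hq]
    · simpa [starSupp, hq] using starSupp_subset_of_le h.1 hq
  refine ⟨_, hsupp, ⟨⟨fun i => ?_, h.2.subset fun i hi => ?_⟩, hsupp.symm⟩, fun i hq => ?_⟩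
  · by_cases hq : q i = ⊤ <;> simp [hq, h.1 i]
  · by_cases hq : q i = ⊤
    · simp [hq] at hi
    · simpa [hq] using hi
  · exact if_neg hq

end StarProduct

/-- In the *-product `∏*_{i∈X} P_i`: `p ≤ q` iff there is `r` with `p ≤_h r ≤_v q`,
iff there is `t` with `p ≤_v t ≤_h q`. -/
theorem stmt5 (p q : ∀ i, P i)
    (hp : (starSupp p).Countable) (hq : (starSupp q).Countable) :
    (starLe p q ↔ ∃ r : ∀ i, P i, (starSupp r).Countable ∧ starLeH p r ∧ starLeV r q) ∧
    (starLe p q ↔ ∃ t : ∀ i, P i, (starSupp t).Countable ∧ starLeV p t ∧ starLeH t q) := by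
  refine ⟨⟨fun h => ?_, fun ⟨r, _, hpr, hrq⟩ => hpr.starLe.trans hrq.1⟩,
    ⟨fun h => ?_, fun ⟨t, _, hpt, htq⟩ => hpt.1.trans htq.starLe⟩⟩
  · obtain ⟨r, hsupp, hpr, hrq⟩ := exists_starLeH_starLeV_of_starLe h
    exact ⟨r, hsupp ▸ hq, hpr, hrq⟩
  · obtain ⟨t, hsupp, hpt, htq⟩ := exists_starLeV_starLeH_of_starLe h
    exact ⟨t, hsupp ▸ hp, hpt, htq⟩
end

section
/- Suppose κ has countable cofinality, κ = ⋃_{n<ω} I_n with each |I_n| < κ, and for each n there is a family 𝒜_n ⊆ [I_n]^ω with |𝒜_n| ≤ |I_n| refining [I_n]^{ω₁}. Then 𝒜 = ⋃_n 𝒜_n has cardinality at most κ and refines [κ]^{ω₁}. -/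
open Cardinal Set

universe u v

namespace Cardinal

theorem mk_iUnion_le_of_le {α : Type u} {ι : Type v} [Countable ι] {s : ι → Set α}
    {a : Cardinal.{u}} (ha : ℵ₀ ≤ a) (hs : ∀ i, #(s i) ≤ a) : #(⋃ i, s i) ≤ a := by
  rw [← lift_le.{v}]
  calc lift.{v} #(⋃ i, s i) ≤ lift.{u} #ι * ⨆ i, lift.{v} #(s i) := mk_iUnion_le_lift s
    _ ≤ ℵ₀ * lift.{v} a := by
        gcongr
        · exact mk_le_aleph0
        · exact ciSup_le' fun i => lift_le.2 (hs i)
    _ = lift.{v} a := aleph0_mul_eq (aleph0_le_lift.2 ha)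

theorem exists_mk_inter_eq_aleph_one {α : Type u} {ι : Type v} [Countable ι] {I : ι → Set α}
    {X : Set α} (hX : #X = ℵ₁) (hXI : X ⊆ ⋃ i, I i) : ∃ i, #(X ∩ I i : Set α) = ℵ₁ := by
  by_contra! hne
  have hcount : ∀ i, (X ∩ I i).Countable := fun i =>
    le_aleph0_iff_set_countable.1 <| lt_aleph_one_iff.1
      (((mk_le_mk_of_subset inter_subset_left).trans_eq hX).lt_of_ne (hne i))
  have hXcount : X.Countable := by
    rw [← inter_eq_left.2 hXI, inter_iUnion]
    exact countable_iUnion hcount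
  exact (lt_aleph_one_iff.2 (le_aleph0_iff_set_countable.2 hXcount)).ne hX

end Cardinal

theorem stmt7_general {α : Type} (hcof : (Cardinal.mk α).ord.cof = Cardinal.aleph0)
    (I : ℕ → Set α) (hIcover : (⋃ n, I n) = Set.univ)
    (hIsmall : ∀ n, #(I n) < #α)
    (𝒜 : ℕ → Set (Set α))
    (h𝒜card : ∀ n, #(𝒜 n) ≤ #(I n))
    (h𝒜ref : ∀ n, ∀ X : Set α, X ⊆ I n → #X = Cardinal.aleph 1 → ∃ A ∈ 𝒜 n, A ⊆ X) :
    #(⋃ n, 𝒜 n : Set (Set α)) ≤ #α ∧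
    ∀ X : Set α, #X = Cardinal.aleph 1 → ∃ A ∈ ⋃ n, 𝒜 n, A ⊆ X := by
  have hα : ℵ₀ ≤ #α := hcof ▸ Ordinal.cof_ord_le #α
  refine ⟨mk_iUnion_le_of_le hα fun n => (h𝒜card n).trans (hIsmall n).le, fun X hX => ?_⟩
  obtain ⟨n, hn⟩ := exists_mk_inter_eq_aleph_one hX (hIcover ▸ subset_univ X)
  obtain ⟨A, hA, hAX⟩ := h𝒜ref n _ inter_subset_right hn
  exact ⟨A, mem_iUnion_of_mem n hA, hAX.trans inter_subset_left⟩

/-- Suppose `κ = #α` has countable cofinality, `α = ⋃ₙ Iₙ` with each `|Iₙ| < κ`, and for each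
`n` there is `𝒜ₙ ⊆ [Iₙ]^ω` with `|𝒜ₙ| ≤ |Iₙ|` refining `[Iₙ]^{ω₁}`. Then `𝒜 = ⋃ₙ 𝒜ₙ` has
cardinality at most `κ` and refines `[α]^{ω₁}`. -/
theorem stmt7 {α : Type} (hcof : (Cardinal.mk α).ord.cof = Cardinal.aleph0)
    (I : ℕ → Set α) (hIcover : (⋃ n, I n) = Set.univ)
    (hIsmall : ∀ n, #(I n) < #α)
    (𝒜 : ℕ → Set (Set α))
    (h𝒜sub : ∀ n, ∀ A ∈ 𝒜 n, A ⊆ I n ∧ #A = Cardinal.aleph0)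
    (h𝒜card : ∀ n, #(𝒜 n) ≤ #(I n))
    (h𝒜ref : ∀ n, ∀ X : Set α, X ⊆ I n → #X = Cardinal.aleph 1 → ∃ A ∈ 𝒜 n, A ⊆ X) :
    #(⋃ n, 𝒜 n : Set (Set α)) ≤ #α ∧
    ∀ X : Set α, #X = Cardinal.aleph 1 → ∃ A ∈ ⋃ n, 𝒜 n, A ⊆ X :=
  stmt7_general hcof I hIcover hIsmall 𝒜 h𝒜card h𝒜ref
end
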